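/- arXiv:1610.01649 — 2 statements merged into one kernel-verified Lean document; each statement's English description precedes it below -/
import Mathlib

section
/- Let H be a Hilbert space, Y, Z Banach spaces, and L : H → Y × Z a bounded linear operator with finite-dimensional kernel satisfying the compactness estimate ‖h‖_H ≤ C(‖Lh‖ + ‖j h‖_{H₀}) for a compact embedding j : H → H₀ into a Hilbert space H₀. Then there exists ε₀ > 0 such that ‖Lh‖ ≥ ε₀ ‖j h‖_{H₀} for all h orthogonal (in H) to ker L. -/
/-!
Peetre's argument. If the bound failed there would be unit vectors `uₙ ⟂ ker L` with `L uₙ → 0`.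
By compactness of `j` a subsequence has `j uₙ` convergent, and the estimate
`‖h‖ ≤ C (‖L h‖ + ‖j h‖)` applied to differences makes that subsequence Cauchy in `H`. Its limit
is a unit vector lying both in `ker L` and in its orthogonal complement, which is absurd. This gives
`c ‖h‖ ≤ ‖L h‖` on `(ker L)ᗮ`, and `‖j h‖ ≤ ‖j‖ ‖h‖` finishes.
-/

open Filter Topology

section

variable {E F G : Type*} [SeminormedAddCommGroup E] [SeminormedAddCommGroup F]
  [SeminormedAddCommGroup G]

theorem cauchySeq_of_norm_le_mul_add {L : E →+ F} {j : E →+ G} {C : ℝ}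
    (hest : ∀ x, ‖x‖ ≤ C * (‖L x‖ + ‖j x‖)) {u : ℕ → E}
    (hLu : Tendsto (fun n ↦ L (u n)) atTop (𝓝 0)) (hju : CauchySeq fun n ↦ j (u n)) :
    CauchySeq u := by
  rw [cauchySeq_iff_tendsto_dist_atTop_0] at hju ⊢
  have hL : Tendsto (fun p : ℕ × ℕ ↦ ‖L (u p.1 - u p.2)‖) atTop (𝓝 0) := by
    rw [← prod_atTop_atTop_eq]
    simpa using ((hLu.comp tendsto_fst).sub (hLu.comp tendsto_snd)).norm
  refine squeeze_zero (fun _ ↦ dist_nonneg) (fun p ↦ ?_) (by simpa using (hL.add hju).const_mul C)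
  simpa only [dist_eq_norm, map_sub] using hest (u p.1 - u p.2)

end

section

variable {𝕜 E F G : Type*} [RCLike 𝕜] [NormedAddCommGroup E] [NormedSpace 𝕜 E]
  [NormedAddCommGroup F] [NormedSpace 𝕜 F] [NormedAddCommGroup G] [NormedSpace 𝕜 G]

theorem Submodule.exists_pos_mul_norm_le_of_forall_not_tendsto_zero {V : Submodule 𝕜 E}
    {L : E →ₗ[𝕜] F}
    (h : ∀ u : ℕ → E, (∀ n, u n ∈ V) → (∀ n, ‖u n‖ = 1) →
      ¬Tendsto (fun n ↦ L (u n)) atTop (𝓝 0)) :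
    ∃ c > 0, ∀ x ∈ V, c * ‖x‖ ≤ ‖L x‖ := by
  by_contra! hcon
  have hseq (n : ℕ) : ∃ u ∈ V, ‖u‖ = 1 ∧ ‖L u‖ < 1 / (n + 1) := by
    obtain ⟨x, hxV, hx⟩ := hcon (1 / (n + 1)) (by positivity)
    have hx0 : x ≠ 0 := by rintro rfl; simp at hx
    refine ⟨(‖x‖⁻¹ : 𝕜) • x, V.smul_mem _ hxV, norm_smul_inv_norm hx0, ?_⟩
    rw [map_smul, norm_smul, norm_inv, RCLike.norm_ofReal, abs_norm,
      inv_mul_lt_iff₀ (norm_pos_iff.mpr hx0)]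
    linarith
  choose u huV hu1 hLu using hseq
  exact h u huV hu1 <|
    squeeze_zero_norm (fun n ↦ (hLu n).le) tendsto_one_div_add_atTop_nhds_zero_nat

theorem exists_pos_mul_norm_le_of_isCompactOperator [CompleteSpace E] {L : E →L[𝕜] F}
    {j : E →L[𝕜] G} (hj : IsCompactOperator j) {C : ℝ}
    (hest : ∀ x, ‖x‖ ≤ C * (‖L x‖ + ‖j x‖)) {V : Submodule 𝕜 E} (hV : IsClosed (V : Set E))
    (hVL : Disjoint V (LinearMap.ker (L : E →ₗ[𝕜] F))) :
    ∃ c > 0, ∀ x ∈ V, c * ‖x‖ ≤ ‖L x‖ := by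
  refine V.exists_pos_mul_norm_le_of_forall_not_tendsto_zero fun u huV hu1 hLu ↦ ?_
  obtain ⟨K, hK, hjK⟩ := hj.image_closedBall_subset_compact 1
  obtain ⟨y, -, φ, hφ, hjy⟩ :=
    hK.tendsto_subseq (x := fun n ↦ j (u n)) fun n ↦ hjK ⟨u n, by simp [hu1], rfl⟩
  obtain ⟨x, hx⟩ := cauchySeq_tendsto_of_complete <|
    cauchySeq_of_norm_le_mul_add (L := L.toLinearMap.toAddMonoidHom)
      (j := j.toLinearMap.toAddMonoidHom) hest (hLu.comp hφ.tendsto_atTop) hjy.cauchySeq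
  have hxV : x ∈ V := hV.mem_of_tendsto hx (.of_forall fun n ↦ huV (φ n))
  have hxL : x ∈ LinearMap.ker (L : E →ₗ[𝕜] F) :=
    tendsto_nhds_unique ((L.continuous.tendsto x).comp hx) (hLu.comp hφ.tendsto_atTop)
  have hx1 : ‖x‖ = 1 := tendsto_nhds_unique hx.norm (by simp [hu1])
  simp [Submodule.disjoint_def.mp hVL x hxV hxL] at hx1

end

theorem stmt_2_general {H H₀ Y Z : Type*}
    [NormedAddCommGroup H] [InnerProductSpace ℝ H] [CompleteSpace H]
    [NormedAddCommGroup H₀] [InnerProductSpace ℝ H₀]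
    [NormedAddCommGroup Y] [NormedSpace ℝ Y]
    [NormedAddCommGroup Z] [NormedSpace ℝ Z]
    (L : H →L[ℝ] Y × Z)
    (j : H →L[ℝ] H₀) (hj_cpt : IsCompactOperator j)
    (C : ℝ)
    (hest : ∀ h : H, ‖h‖ ≤ C * ((‖(L h).1‖ + ‖(L h).2‖) + ‖j h‖)) :
    ∃ ε₀ > (0 : ℝ), ∀ h ∈ (LinearMap.ker (L : H →ₗ[ℝ] Y × Z))ᗮ,
      ε₀ * ‖j h‖ ≤ ‖(L h).1‖ + ‖(L h).2‖ := by
  -- `L₁` is `L` with the `ℓ¹` norm `‖y‖ + ‖z‖` on `Y × Z`.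
  set L₁ : H →L[ℝ] WithLp 1 (Y × Z) :=
    (WithLp.prodContinuousLinearEquiv 1 ℝ Y Z).symm.toContinuousLinearMap ∘L L
  have hL₁ (h : H) : ‖L₁ h‖ = ‖(L h).1‖ + ‖(L h).2‖ := WithLp.prod_norm_eq_of_L1 _
  have ker_L₁ :
      LinearMap.ker (L₁ : H →ₗ[ℝ] WithLp 1 (Y × Z)) = LinearMap.ker (L : H →ₗ[ℝ] Y × Z) :=
    LinearEquiv.ker_comp _ _
  obtain ⟨c, hc, hcL⟩ := exists_pos_mul_norm_le_of_isCompactOperator hj_cpt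
    (L := L₁) (by simpa only [hL₁] using hest) (Submodule.isClosed_orthogonal _)
    (by rw [ker_L₁]; exact (Submodule.orthogonal_disjoint _).symm)
  refine ⟨c / (‖j‖ + 1), by positivity, fun h hh ↦ ?_⟩
  calc c / (‖j‖ + 1) * ‖j h‖ ≤ c / (‖j‖ + 1) * ((‖j‖ + 1) * ‖h‖) := by
        gcongr
        exact (j.le_opNorm h).trans (by gcongr; linarith)
    _ = c * ‖h‖ := by field_simp
    _ ≤ ‖(L h).1‖ + ‖(L h).2‖ := hL₁ h ▸ hcL h hh

/-- Coercivity estimate away from the (finite-dimensional) kernel. -/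
theorem stmt_2 {H H₀ Y Z : Type*}
    [NormedAddCommGroup H] [InnerProductSpace ℝ H] [CompleteSpace H]
    [NormedAddCommGroup H₀] [InnerProductSpace ℝ H₀] [CompleteSpace H₀]
    [NormedAddCommGroup Y] [NormedSpace ℝ Y] [CompleteSpace Y]
    [NormedAddCommGroup Z] [NormedSpace ℝ Z] [CompleteSpace Z]
    (L : H →L[ℝ] Y × Z)
    (hker : FiniteDimensional ℝ (LinearMap.ker (L : H →ₗ[ℝ] Y × Z)))
    (j : H →L[ℝ] H₀) (hj_inj : Function.Injective j) (hj_cpt : IsCompactOperator j)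
    (C : ℝ) (hC : 0 < C)
    (hest : ∀ h : H, ‖h‖ ≤ C * ((‖(L h).1‖ + ‖(L h).2‖) + ‖j h‖)) :
    ∃ ε₀ > (0 : ℝ), ∀ h ∈ (LinearMap.ker (L : H →ₗ[ℝ] Y × Z))ᗮ,
      ε₀ * ‖j h‖ ≤ ‖(L h).1‖ + ‖(L h).2‖ :=
  stmt_2_general L j hj_cpt C hest
end

section
/- Compensated compactness in Banach spaces: Let H be a Hilbert space, Y and Z reflexive Banach spaces, and S : H → Y, T : H → Z bounded linear operators such that (Op1) S ∘ T† = 0 and T ∘ S† = 0, and (Op2) there is a Hilbert space H₀ with compact embedding j : H → H₀ and constant C with ‖h‖_H ≤ C(‖Sh‖_Y + ‖Th‖_Z + ‖j h‖_{H₀}) for all h. If uₙ ⇀ ū and vₙ ⇀ v̄ weakly in H, {S uₙ} is precompact in Y, and {T vₙ} is precompact in Z, then ⟨uₙ, vₙ⟩_H → ⟨ū, v̄⟩_H. -/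
/-!
Let `K` be the closure of the range of `T†`. By (Op1) `S` vanishes on `K`, and by definition of
the adjoint `T` vanishes on `Kᗮ`. Writing `P` for the orthogonal projection onto `K`,
`⟪u, v⟫ = ⟪(1 - P) u, v⟫ + ⟪u, P v⟫`. The sequence `(1 - P) uₙ` converges weakly, its image
under `T` is `0` and its image under `S` is `S uₙ`, which converges strongly by precompactness;
the a priori estimate (Op2), together with the compactness of `j`, upgrades this to strong
convergence. Symmetrically `P vₙ` converges strongly, and a strongly convergent sequence paired
with a weakly convergent one has convergent inner products.
-/

open scoped RealInnerProductSpace Topology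
open NormedSpace Filter Set

section WeakConvergence

variable {𝕜 E F : Type*} [RCLike 𝕜] [NormedAddCommGroup E] [NormedSpace 𝕜 E]
  [NormedAddCommGroup F] [NormedSpace 𝕜 F]

variable (𝕜) in
def WeakTendsto (u : ℕ → E) (x : E) : Prop :=
  ∀ a : StrongDual 𝕜 E, Tendsto (fun n => a (u n)) atTop (𝓝 (a x))

variable {u : ℕ → E} {x : E}

theorem WeakTendsto.map (hu : WeakTendsto 𝕜 u x) (f : E →L[𝕜] F) :
    WeakTendsto 𝕜 (fun n => f (u n)) (f x) :=
  fun a => hu (a.comp f)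

theorem WeakTendsto.exists_norm_le (hu : WeakTendsto 𝕜 u x) : ∃ M, ∀ n, ‖u n‖ ≤ M := by
  obtain ⟨M, hM⟩ := banach_steinhaus (g := fun n => inclusionInDoubleDual 𝕜 E (u n)) fun a => by
    obtain ⟨M, hM⟩ := (hu a).norm.bddAbove_range
    exact ⟨M, fun n => hM ⟨n, rfl⟩⟩
  exact ⟨M, fun n => (inclusionInDoubleDualLi 𝕜).norm_map (u n) ▸ hM n⟩

theorem WeakTendsto.tendsto_of_isCompact {K : Set E} (hK : IsCompact K) (hu : WeakTendsto 𝕜 u x)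
    (huK : ∀ n, u n ∈ K) : Tendsto u atTop (𝓝 x) := by
  refine tendsto_of_subseq_tendsto fun ns hns => ?_
  obtain ⟨y, -, φ, hφ, hy⟩ := hK.tendsto_subseq fun n => huK (ns n)
  suffices y = x from ⟨φ, this ▸ hy⟩
  exact SeparatingDual.eq_iff_forall_dual_eq.2 fun a => tendsto_nhds_unique
    ((a.continuous.tendsto y).comp hy) ((hu a).comp (hns.comp hφ.tendsto_atTop))

theorem WeakTendsto.tendsto_map_of_isCompactOperator (hu : WeakTendsto 𝕜 u x) {f : E →L[𝕜] F}
    (hf : IsCompactOperator f) : Tendsto (fun n => f (u n)) atTop (𝓝 (f x)) := by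
  obtain ⟨M, hM⟩ := hu.exists_norm_le
  exact (hu.map f).tendsto_of_isCompact (hf.isCompact_closure_image_closedBall M) fun n =>
    subset_closure ⟨u n, mem_closedBall_zero_iff.2 (hM n), rfl⟩

theorem WeakTendsto.tendsto_of_norm_le {F₁ F₂ F₃ : Type*}
    [NormedAddCommGroup F₁] [NormedSpace 𝕜 F₁] [NormedAddCommGroup F₂] [NormedSpace 𝕜 F₂]
    [NormedAddCommGroup F₃] [NormedSpace 𝕜 F₃]
    (S : E →L[𝕜] F₁) (T : E →L[𝕜] F₂) {j : E →L[𝕜] F₃} (hj : IsCompactOperator j) {C : ℝ}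
    (hest : ∀ h, ‖h‖ ≤ C * (‖S h‖ + ‖T h‖ + ‖j h‖)) (hu : WeakTendsto 𝕜 u x)
    (hS : Tendsto (fun n => S (u n)) atTop (𝓝 (S x)))
    (hT : Tendsto (fun n => T (u n)) atTop (𝓝 (T x))) :
    Tendsto u atTop (𝓝 x) := by
  have hj' := hu.tendsto_map_of_isCompactOperator hj
  rw [tendsto_iff_norm_sub_tendsto_zero] at hS hT hj' ⊢
  refine squeeze_zero (fun _ => norm_nonneg _) (fun n => ?_)
    (by simpa using ((hS.add hT).add hj').const_mul C)
  simpa only [map_sub] using hest (u n - x)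

end WeakConvergence

theorem topologicalClosure_range_le_ker {A E F G : Type*} [Semiring A]
    [AddCommMonoid E] [Module A E] [TopologicalSpace E] [ContinuousAdd E] [ContinuousConstSMul A E]
    [AddCommMonoid F] [Module A F] [TopologicalSpace F] [T1Space F]
    [AddCommMonoid G] [Module A G] [TopologicalSpace G] {S : E →L[A] F} {R : G →L[A] E}
    (hSR : ∀ b, S (R b) = 0) : R.range.topologicalClosure ≤ S.ker := by
  refine Submodule.topologicalClosure_minimal _ ?_ S.isClosed_ker
  rintro _ ⟨b, rfl⟩
  exact hSR b

section Hilbert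

variable {H : Type*} [NormedAddCommGroup H] [InnerProductSpace ℝ H] {u v : ℕ → H} {x y : H}

theorem weakTendsto_of_tendsto_inner [CompleteSpace H]
    (hu : ∀ h, Tendsto (fun n => ⟪u n, h⟫) atTop (𝓝 ⟪x, h⟫)) : WeakTendsto ℝ u x := fun a => by
  simpa only [real_inner_comm ((InnerProductSpace.toDual ℝ H).symm a),
    InnerProductSpace.toDual_symm_apply] using hu ((InnerProductSpace.toDual ℝ H).symm a)

theorem Filter.Tendsto.inner_of_weakTendsto (hu : Tendsto u atTop (𝓝 x)) (hv : WeakTendsto ℝ v y) :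
    Tendsto (fun n => ⟪u n, v n⟫) atTop (𝓝 ⟪x, y⟫) := by
  obtain ⟨M, hM⟩ := hv.exists_norm_le
  have hsmall : Tendsto (fun n => ⟪u n - x, v n⟫) atTop (𝓝 0) := by
    refine squeeze_zero_norm (fun n => ?_)
      (by simpa using (tendsto_iff_norm_sub_tendsto_zero.1 hu).mul_const M)
    calc ‖⟪u n - x, v n⟫‖ ≤ ‖u n - x‖ * ‖v n‖ := norm_inner_le_norm _ _
      _ ≤ ‖u n - x‖ * M := by gcongr; exact hM n
  simpa [inner_sub_left] using hsmall.add (hv (innerSL ℝ x))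

theorem tendsto_inner_of_tendsto_starProjection (K : Submodule ℝ H) [K.HasOrthogonalProjection]
    (hu : WeakTendsto ℝ u x) (hv : WeakTendsto ℝ v y)
    (hKu : Tendsto (fun n => Kᗮ.starProjection (u n)) atTop (𝓝 (Kᗮ.starProjection x)))
    (hKv : Tendsto (fun n => K.starProjection (v n)) atTop (𝓝 (K.starProjection y))) :
    Tendsto (fun n => ⟪u n, v n⟫) atTop (𝓝 ⟪x, y⟫) := by
  have hsplit : ∀ a b : H, ⟪a, b⟫ = ⟪Kᗮ.starProjection a, b⟫ + ⟪K.starProjection b, a⟫ := by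
    intro a b
    conv_lhs => rw [← K.starProjection_add_starProjection_orthogonal a]
    rw [inner_add_left, K.inner_starProjection_left_eq_right, real_inner_comm a]
    ring
  rw [hsplit x y]
  exact ((hKu.inner_of_weakTendsto hv).add (hKv.inner_of_weakTendsto hu)).congr fun n =>
    (hsplit _ _).symm

theorem map_starProjection_of_orthogonal_le_ker {F : Type*} [NormedAddCommGroup F]
    [NormedSpace ℝ F] (K : Submodule ℝ H) [K.HasOrthogonalProjection] {T : H →L[ℝ] F}
    (hK : Kᗮ ≤ T.ker) (w : H) : T (K.starProjection w) = T w := by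
  have hw : T (Kᗮ.starProjection w) = 0 := hK (Kᗮ.starProjection_apply_mem w)
  conv_rhs => rw [← K.starProjection_add_starProjection_orthogonal w, map_add, hw, add_zero]

theorem orthogonal_le_ker_of_range_le {Z : Type*} [NormedAddCommGroup Z] [NormedSpace ℝ Z]
    {T : H →L[ℝ] Z} {Td : StrongDual ℝ Z →L[ℝ] H} (hTd : ∀ b h, ⟪Td b, h⟫ = b (T h))
    {K : Submodule ℝ H} (hK : Td.range ≤ K) : Kᗮ ≤ T.ker := fun h hh =>
  show T h = 0 from (SeparatingDual.eq_iff_forall_dual_eq (R := ℝ)).2 fun b => by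
    rw [map_zero, ← hTd]
    exact hh (Td b) (hK ⟨b, rfl⟩)

end Hilbert

theorem stmt_7_general {H H₀ Y Z : Type*}
    [NormedAddCommGroup H] [InnerProductSpace ℝ H] [CompleteSpace H]
    [NormedAddCommGroup H₀] [InnerProductSpace ℝ H₀]
    [NormedAddCommGroup Y] [NormedSpace ℝ Y]
    [NormedAddCommGroup Z] [NormedSpace ℝ Z]
    (S : H →L[ℝ] Y) (T : H →L[ℝ] Z)
    -- the adjoints via the Riesz identification
    (Td : StrongDual ℝ Z →L[ℝ] H) (hTd : ∀ (b : StrongDual ℝ Z) (h : H), ⟪Td b, h⟫ = b (T h))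
    -- (Op1): orthogonality
    (hop1 : ∀ b : StrongDual ℝ Z, S (Td b) = 0)
    -- (Op2): a priori estimate with a compact embedding
    (j : H →L[ℝ] H₀) (hj_cpt : IsCompactOperator j)
    (C : ℝ)
    (hest : ∀ h : H, ‖h‖ ≤ C * (‖S h‖ + ‖T h‖ + ‖j h‖))
    -- (Seq1): weak convergence
    (u v : ℕ → H) (ubar vbar : H)
    (hu : ∀ h : H, Tendsto (fun n => ⟪u n, h⟫) atTop (nhds ⟪ubar, h⟫))
    (hv : ∀ h : H, Tendsto (fun n => ⟪v n, h⟫) atTop (nhds ⟪vbar, h⟫))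
    -- (Seq2): precompactness of the constrained sequences
    (hSu : IsCompact (closure (Set.range fun n => S (u n))))
    (hTv : IsCompact (closure (Set.range fun n => T (v n)))) :
    Tendsto (fun n => ⟪u n, v n⟫) atTop (nhds ⟪ubar, vbar⟫) := by
  set K := Td.range.topologicalClosure
  have : CompleteSpace K := Td.range.isClosed_topologicalClosure.completeSpace_coe
  have hSK : K ≤ S.ker := topologicalClosure_range_le_ker hop1
  have hTK : Kᗮ ≤ T.ker := orthogonal_le_ker_of_range_le hTd Td.range.le_topologicalClosure
  have hSP : ∀ w, S (K.starProjection w) = 0 := fun w => hSK (K.starProjection_apply_mem w)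
  have hTP : ∀ w, T (Kᗮ.starProjection w) = 0 := fun w => hTK (Kᗮ.starProjection_apply_mem w)
  have hu' := weakTendsto_of_tendsto_inner hu
  have hv' := weakTendsto_of_tendsto_inner hv
  refine tendsto_inner_of_tendsto_starProjection K hu' hv' ?_ ?_
  · refine (hu'.map _).tendsto_of_norm_le S T hj_cpt hest ?_ ?_
    · simpa only [map_starProjection_of_orthogonal_le_ker Kᗮ (K.orthogonal_orthogonal.le.trans hSK)]
        using (hu'.map S).tendsto_of_isCompact hSu fun n => subset_closure (mem_range_self n)
    · simpa only [hTP] using tendsto_const_nhds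
  · refine (hv'.map _).tendsto_of_norm_le S T hj_cpt hest ?_ ?_
    · simpa only [hSP] using tendsto_const_nhds
    · simpa only [map_starProjection_of_orthogonal_le_ker K hTK]
        using (hv'.map T).tendsto_of_isCompact hTv fun n => subset_closure (mem_range_self n)

/-- Compensated compactness theorem in Banach spaces (Theorem 2.2 of the paper). -/
theorem stmt_7 {H H₀ Y Z : Type*}
    [NormedAddCommGroup H] [InnerProductSpace ℝ H] [CompleteSpace H]
    [NormedAddCommGroup H₀] [InnerProductSpace ℝ H₀] [CompleteSpace H₀]
    [NormedAddCommGroup Y] [NormedSpace ℝ Y] [CompleteSpace Y]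
    [NormedAddCommGroup Z] [NormedSpace ℝ Z] [CompleteSpace Z]
    (hYrefl : Function.Surjective (inclusionInDoubleDual ℝ Y))
    (hZrefl : Function.Surjective (inclusionInDoubleDual ℝ Z))
    (S : H →L[ℝ] Y) (T : H →L[ℝ] Z)
    -- the adjoints via the Riesz identification
    (Sd : StrongDual ℝ Y →L[ℝ] H) (hSd : ∀ (a : StrongDual ℝ Y) (h : H), ⟪Sd a, h⟫ = a (S h))
    (Td : StrongDual ℝ Z →L[ℝ] H) (hTd : ∀ (b : StrongDual ℝ Z) (h : H), ⟪Td b, h⟫ = b (T h))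
    -- (Op1): orthogonality
    (hop1 : ∀ b : StrongDual ℝ Z, S (Td b) = 0)
    (hop2 : ∀ a : StrongDual ℝ Y, T (Sd a) = 0)
    -- (Op2): a priori estimate with a compact embedding
    (j : H →L[ℝ] H₀) (hj_inj : Function.Injective j) (hj_cpt : IsCompactOperator j)
    (C : ℝ) (hC : 0 < C)
    (hest : ∀ h : H, ‖h‖ ≤ C * (‖S h‖ + ‖T h‖ + ‖j h‖))
    -- (Seq1): weak convergence
    (u v : ℕ → H) (ubar vbar : H)
    (hu : ∀ h : H, Tendsto (fun n => ⟪u n, h⟫) atTop (nhds ⟪ubar, h⟫))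
    (hv : ∀ h : H, Tendsto (fun n => ⟪v n, h⟫) atTop (nhds ⟪vbar, h⟫))
    -- (Seq2): precompactness of the constrained sequences
    (hSu : IsCompact (closure (Set.range fun n => S (u n))))
    (hTv : IsCompact (closure (Set.range fun n => T (v n)))) :
    Tendsto (fun n => ⟪u n, v n⟫) atTop (nhds ⟪ubar, vbar⟫) :=
  stmt_7_general S T Td hTd hop1 j hj_cpt C hest u v ubar vbar hu hv hSu hTv
end
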